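/- For θ ∈ ℝ define X_θ : ℝ² → ℝ⁴ by X_θ(u, v) := cos θ · (sinh u · sin u, sinh u · cos u, cosh u · sinh v, cosh u · cosh v) + sin θ · (−cos u · cos v, sin u · cos v, cosh v · sin v, sinh v · sin v). Then for all (u, v) ∈ ℝ²: ⟨∂_u X_θ, ∂_u X_θ⟩ = ⟨∂_v X_θ, ∂_v X_θ⟩ = (cos θ · cosh u + sin θ · cos v)² and ⟨∂_u X_θ, ∂_v X_θ⟩ = 0, where ⟨·,·⟩ is the Lorentz bilinear form on ℝ⁴. In particular, on any open set where cos θ · cosh u + sin θ · cos v ≠ 0, X_θ is a conformal spacelike immersion with induced metric (cos θ · cosh u + sin θ · cos v)²·(du² + dv²). -/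

import Mathlib

/-! Since `X_θ = cos θ • A + sin θ • B` for two fixed surfaces `A` and `B`, the partial derivatives
of `X_θ` are the same combinations of those of `A` and `B`, and every Lorentz product among them
reduces to a polynomial identity that follows from `sin² u + cos² u = 1` and
`cosh² v - sinh² v = 1`. -/

/-- The Lorentz bilinear form on ℝ⁴ (Lorentz–Minkowski space 𝕃⁴). -/
def lorR (x y : Fin 4 → ℝ) : ℝ := x 0 * y 0 + x 1 * y 1 + x 2 * y 2 - x 3 * y 3

/-- Partial derivative of a map `ℝ² → ℝ⁴` in the first variable. -/
noncomputable def pd1 (X : ℝ → ℝ → Fin 4 → ℝ) (u v : ℝ) : Fin 4 → ℝ :=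
  fun i => deriv (fun t => X t v i) u

/-- Partial derivative of a map `ℝ² → ℝ⁴` in the second variable. -/
noncomputable def pd2 (X : ℝ → ℝ → Fin 4 → ℝ) (u v : ℝ) : Fin 4 → ℝ :=
  fun i => deriv (fun t => X u t i) v

/-- Second partial derivative `∂_u ∂_u` of a map `ℝ² → ℝ⁴`. -/
noncomputable def pd11 (X : ℝ → ℝ → Fin 4 → ℝ) (u v : ℝ) : Fin 4 → ℝ :=
  fun i => deriv (fun t => deriv (fun s => X s v i) t) u

/-- Second partial derivative `∂_v ∂_v` of a map `ℝ² → ℝ⁴`. -/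
noncomputable def pd22 (X : ℝ → ℝ → Fin 4 → ℝ) (u v : ℝ) : Fin 4 → ℝ :=
  fun i => deriv (fun t => deriv (fun s => X u s i) t) v

open Real

lemma pd1_eq_of_hasDerivAt {X : ℝ → ℝ → Fin 4 → ℝ} {u v : ℝ} {x' : Fin 4 → ℝ}
    (h : HasDerivAt (fun t => X t v) x' u) : pd1 X u v = x' :=
  funext fun i => (hasDerivAt_pi.1 h i).deriv

lemma pd2_eq_of_hasDerivAt {X : ℝ → ℝ → Fin 4 → ℝ} {u v : ℝ} {x' : Fin 4 → ℝ}
    (h : HasDerivAt (fun t => X u t) x' v) : pd2 X u v = x' :=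
  funext fun i => (hasDerivAt_pi.1 h i).deriv

noncomputable def surfaceA (u v : ℝ) : Fin 4 → ℝ :=
  ![sinh u * sin u, sinh u * cos u, cosh u * sinh v, cosh u * cosh v]

noncomputable def surfaceB (u v : ℝ) : Fin 4 → ℝ :=
  ![-(cos u * cos v), sin u * cos v, cosh v * sin v, sinh v * sin v]

lemma hasDerivAt_surfaceA_fst (u v : ℝ) :
    HasDerivAt (fun t => surfaceA t v)
      ![cosh u * sin u + sinh u * cos u, cosh u * cos u - sinh u * sin u,
        sinh u * sinh v, sinh u * cosh v] u := by
  refine hasDerivAt_pi.2 fun i => ?_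
  fin_cases i
  · exact (hasDerivAt_sinh u).mul (hasDerivAt_sin u)
  · exact ((hasDerivAt_sinh u).mul (hasDerivAt_cos u)).congr_deriv (by simp [sub_eq_add_neg])
  · exact (hasDerivAt_cosh u).mul_const _
  · exact (hasDerivAt_cosh u).mul_const _

lemma hasDerivAt_surfaceA_snd (u v : ℝ) :
    HasDerivAt (fun t => surfaceA u t) ![0, 0, cosh u * cosh v, cosh u * sinh v] v := by
  refine hasDerivAt_pi.2 fun i => ?_
  fin_cases i
  · exact hasDerivAt_const _ _
  · exact hasDerivAt_const _ _
  · exact (hasDerivAt_sinh v).const_mul _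
  · exact (hasDerivAt_cosh v).const_mul _

lemma hasDerivAt_surfaceB_fst (u v : ℝ) :
    HasDerivAt (fun t => surfaceB t v) ![sin u * cos v, cos u * cos v, 0, 0] u := by
  refine hasDerivAt_pi.2 fun i => ?_
  fin_cases i
  · exact ((hasDerivAt_cos u).mul_const _).neg.congr_deriv (by simp)
  · exact (hasDerivAt_sin u).mul_const _
  · exact hasDerivAt_const _ _
  · exact hasDerivAt_const _ _

lemma hasDerivAt_surfaceB_snd (u v : ℝ) :
    HasDerivAt (fun t => surfaceB u t)
      ![cos u * sin v, -(sin u * sin v), sinh v * sin v + cosh v * cos v,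
        cosh v * sin v + sinh v * cos v] v := by
  refine hasDerivAt_pi.2 fun i => ?_
  fin_cases i
  · exact ((hasDerivAt_cos v).const_mul _).neg.congr_deriv (by simp)
  · exact ((hasDerivAt_cos v).const_mul _).congr_deriv (by simp)
  · exact (hasDerivAt_cosh v).mul (hasDerivAt_sin v)
  · exact (hasDerivAt_sinh v).mul (hasDerivAt_sin v)

noncomputable def surfaceX (θ u v : ℝ) : Fin 4 → ℝ := cos θ • surfaceA u v + sin θ • surfaceB u v

lemma pd1_surfaceX (θ u v : ℝ) :
    pd1 (surfaceX θ) u v =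
      cos θ • ![cosh u * sin u + sinh u * cos u, cosh u * cos u - sinh u * sin u,
        sinh u * sinh v, sinh u * cosh v] + sin θ • ![sin u * cos v, cos u * cos v, 0, 0] :=
  pd1_eq_of_hasDerivAt <|
    ((hasDerivAt_surfaceA_fst u v).const_smul (cos θ)).add
      ((hasDerivAt_surfaceB_fst u v).const_smul (sin θ))

lemma pd2_surfaceX (θ u v : ℝ) :
    pd2 (surfaceX θ) u v =
      cos θ • ![0, 0, cosh u * cosh v, cosh u * sinh v] + sin θ • ![cos u * sin v,
        -(sin u * sin v), sinh v * sin v + cosh v * cos v, cosh v * sin v + sinh v * cos v] :=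
  pd2_eq_of_hasDerivAt <|
    ((hasDerivAt_surfaceA_snd u v).const_smul (cos θ)).add
      ((hasDerivAt_surfaceB_snd u v).const_smul (sin θ))

lemma lorR_pd1_surfaceX_self (θ u v : ℝ) :
    lorR (pd1 (surfaceX θ) u v) (pd1 (surfaceX θ) u v) = (cos θ * cosh u + sin θ * cos v) ^ 2 := by
  simp only [pd1_surfaceX, lorR, Pi.add_apply, Pi.smul_apply, smul_eq_mul, Matrix.cons_val]
  linear_combination (cos θ ^ 2 * (cosh u ^ 2 + sinh u ^ 2)
      + 2 * cos θ * sin θ * cos v * cosh u + sin θ ^ 2 * cos v ^ 2) * sin_sq_add_cos_sq u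
    - cos θ ^ 2 * sinh u ^ 2 * cosh_sq_sub_sinh_sq v

lemma lorR_pd2_surfaceX_self (θ u v : ℝ) :
    lorR (pd2 (surfaceX θ) u v) (pd2 (surfaceX θ) u v) = (cos θ * cosh u + sin θ * cos v) ^ 2 := by
  simp only [pd2_surfaceX, lorR, Pi.add_apply, Pi.smul_apply, smul_eq_mul, Matrix.cons_val]
  linear_combination sin θ ^ 2 * sin v ^ 2 * sin_sq_add_cos_sq u
    + (cos θ ^ 2 * cosh u ^ 2 + 2 * cos θ * sin θ * cosh u * cos v
      + sin θ ^ 2 * (cos v ^ 2 - sin v ^ 2)) * cosh_sq_sub_sinh_sq v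

lemma lorR_pd1_pd2_surfaceX (θ u v : ℝ) :
    lorR (pd1 (surfaceX θ) u v) (pd2 (surfaceX θ) u v) = 0 := by
  simp only [pd1_surfaceX, pd2_surfaceX, lorR, Pi.add_apply, Pi.smul_apply, smul_eq_mul,
    Matrix.cons_val]
  linear_combination sin θ * cos θ * sinh u * sin v * (sin_sq_add_cos_sq u - cosh_sq_sub_sinh_sq v)

/-- The family `X_θ` is conformal with induced metric
`(cos θ cosh u + sin θ cos v)² (du² + dv²)`. -/
theorem stmt_16 (θ : ℝ) (X : ℝ → ℝ → Fin 4 → ℝ)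
    (hX : ∀ u v, X u v = fun i =>
      Real.cos θ * ![Real.sinh u * Real.sin u, Real.sinh u * Real.cos u,
        Real.cosh u * Real.sinh v, Real.cosh u * Real.cosh v] i
      + Real.sin θ * ![-(Real.cos u * Real.cos v), Real.sin u * Real.cos v,
        Real.cosh v * Real.sin v, Real.sinh v * Real.sin v] i) :
    (∀ u v, lorR (pd1 X u v) (pd1 X u v)
        = (Real.cos θ * Real.cosh u + Real.sin θ * Real.cos v) ^ 2) ∧
    (∀ u v, lorR (pd2 X u v) (pd2 X u v)
        = (Real.cos θ * Real.cosh u + Real.sin θ * Real.cos v) ^ 2) ∧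
    (∀ u v, lorR (pd1 X u v) (pd2 X u v) = 0) ∧
    (∀ u v, Real.cos θ * Real.cosh u + Real.sin θ * Real.cos v ≠ 0 →
      0 < lorR (pd1 X u v) (pd1 X u v) ∧ 0 < lorR (pd2 X u v) (pd2 X u v)) := by
  obtain rfl : X = surfaceX θ := funext₂ hX
  refine ⟨lorR_pd1_surfaceX_self θ, lorR_pd2_surfaceX_self θ, lorR_pd1_pd2_surfaceX θ,
    fun u v h => ?_⟩
  rw [lorR_pd1_surfaceX_self, lorR_pd2_surfaceX_self]
  exact ⟨by positivity, by positivity⟩
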